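/- arXiv:1511.02296 — 2 statements merged into one kernel-verified Lean document; each statement's English description precedes it below -/
import Mathlib

section
/- Let V be a measurable space, n, m ≥ 1, f : Vⁿ → [0,1] a measurable function, and D¹, …, Dⁿ probability measures on V. Let p = E_{x∼D¹×⋯×Dⁿ}[f(x)]. Draw, independently for each i ∈ [n], m i.i.d. samples x_{i1}, …, x_{im} from Dⁱ, and let E_{x∼𝐄}[f] denote the average of f over the product of the coordinate-wise empirical distributions, i.e. m^{−n} · ∑_{j₁,…,jₙ ∈ [m]} f(x_{1 j₁}, …, x_{n jₙ}). Then for every δ ∈ (0,1), the probability over the n·m samples that |E_{x∼𝐄}[f] − p| ≥ 2δ is at most 2·exp(−2mδ²/(4p+δ) − ln δ). -/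
/-!
Hoeffding's averaging trick for U-statistics. Index the samples of coordinate `i` by a finite
group `G`. For a shift `k ∈ G^ι`, the tuples `t ↦ (x i (k i + t))ᵢ`, `t ∈ G`, are `|G|` independent
samples of `D¹ × ⋯ × Dⁿ`, and the grid average of `f` is the average over `k` of these diagonal
averages. By convexity of `exp`, the moment generating function of the grid average at `|G| r` is
at most that of a single diagonal sum at `r`, i.e. `mgf(f - p)(r) ^ |G|`. For `f ∈ [0,1]`,
`mgf(f - p)(r) ≤ exp(p (eʳ - 1 - r)) ≤ exp(p r²)` when `|r| ≤ 1`, and a two-sided Chernoff bound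
at `r = δ / (p + δ)` gives the tail estimate.
-/

open MeasureTheory ProbabilityTheory Real
open scoped BigOperators

section Reindexing

variable {ι κ X : Type*} [Fintype ι] [Fintype κ] [MeasurableSpace X]

theorem measurePreserving_comp_equiv (ν : Measure X) [SigmaFinite ν] (e : κ ≃ κ) :
    MeasurePreserving (fun y : κ → X => y ∘ e) (Measure.pi fun _ => ν)
      (Measure.pi fun _ => ν) := by
  convert measurePreserving_arrowCongr' (fun _ => ν) (fun _ => ν) e.symm (MeasurableEquiv.refl X)
    fun _ => MeasurePreserving.id ν
  ext y
  simp [MeasurableEquiv.arrowCongr', Equiv.arrowCongr']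

theorem measurePreserving_swap_pi (μ : ι → κ → Measure X) [∀ i j, IsProbabilityMeasure (μ i j)] :
    MeasurePreserving (Function.swap : (ι → κ → X) → κ → ι → X)
      (Measure.pi fun i => Measure.pi (μ i)) (Measure.pi fun j => Measure.pi fun i => μ i j) := by
  refine ⟨by fun_prop, ?_⟩
  simp_rw [← Measure.infinitePi_eq_pi]
  have hswap : (Function.swap : (ι → κ → X) → κ → ι → X) =
      MeasurableEquiv.curry κ ι X ∘ MeasurableEquiv.piCongrLeft (fun _ => X) (Equiv.prodComm ι κ) ∘
        (MeasurableEquiv.curry ι κ X).symm := by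
    ext x j i
    simp [MeasurableEquiv.piCongrLeft, Equiv.piCongrLeft]
  rw [hswap, ← Measure.map_map (by fun_prop) (by fun_prop),
    ← Measure.map_map (by fun_prop) (by fun_prop), Measure.infinitePi_map_curry_symm,
    show (Measure.infinitePi fun p : ι × κ => μ p.1 p.2).map
        (MeasurableEquiv.piCongrLeft (fun _ => X) (Equiv.prodComm ι κ)) =
        Measure.infinitePi fun p : κ × ι => μ p.2 p.1 from
      Measure.infinitePi_map_piCongrLeft (fun p : κ × ι => μ p.2 p.1) (Equiv.prodComm ι κ)]
  exact Measure.infinitePi_map_curry fun j i => μ i j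

theorem mgf_sum_pi_eq_pow (ν : Measure X) [SigmaFinite ν] (g : X → ℝ) (t : ℝ) :
    mgf (fun y : κ → X => ∑ j, g (y j)) (Measure.pi fun _ => ν) t
      = mgf g ν t ^ Fintype.card κ := by
  simp only [mgf, Finset.mul_sum, exp_sum]
  exact integral_fintype_prod_eq_pow (ι := κ) (μ := ν) fun x => exp (t * g x)

theorem integrable_exp_mul_sum_pi {ν : Measure X} [SigmaFinite ν] {g : X → ℝ} {t : ℝ}
    (h : Integrable (fun x => exp (t * g x)) ν) :
    Integrable (fun y : κ → X => exp (t * ∑ j, g (y j))) (Measure.pi fun _ => ν) := by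
  simp only [Finset.mul_sum, exp_sum]
  exact Integrable.fintype_prod fun _ => h

end Reindexing

section Grid

variable {ι G V : Type*} [Fintype ι] [AddGroup G] [Fintype G] [MeasurableSpace V]

theorem sum_sum_add_const_eq_card_smul [DecidableEq ι] {M : Type*} [AddCommMonoid M]
    (g : (ι → G) → M) :
    ∑ k : ι → G, ∑ t : G, g (fun i => k i + t) = Fintype.card G • ∑ j, g j := by
  rw [Finset.sum_comm]
  have (t : G) : ∑ k : ι → G, g (fun i => k i + t) = ∑ j, g j :=
    Fintype.sum_equiv (Equiv.addRight fun _ : ι => t) _ g fun _ => rfl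
  simp [this]

def shiftedDiagonal (k : ι → G) : (ι → G → V) ≃ᵐ (G → ι → V) where
  toFun x t i := x i (k i + t)
  invFun y i s := y (-k i + s) i
  left_inv x := by ext; simp
  right_inv y := by ext; simp
  measurable_toFun := by dsimp only [Equiv.coe_fn_mk]; fun_prop
  measurable_invFun := by dsimp only [Equiv.coe_fn_symm_mk]; fun_prop

theorem measurePreserving_shiftedDiagonal (D : ι → Measure V) [∀ i, IsProbabilityMeasure (D i)]
    (k : ι → G) :
    MeasurePreserving (shiftedDiagonal k) (Measure.pi fun i => Measure.pi fun _ : G => D i)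
      (Measure.pi fun _ : G => Measure.pi D) :=
  (measurePreserving_swap_pi fun i (_ : G) => D i).comp
    (measurePreserving_pi _ _ fun i => measurePreserving_comp_equiv (D i) (Equiv.addLeft (k i)))

theorem mgf_expect_comp_grid_le [DecidableEq ι] (D : ι → Measure V)
    [∀ i, IsProbabilityMeasure (D i)] {g : (ι → V) → ℝ} {r : ℝ}
    (hg : Integrable (fun y => exp (r * g y)) (Measure.pi D)) :
    mgf (fun x : ι → G → V => 𝔼 j : ι → G, g fun i => x i (j i))
        (Measure.pi fun i => Measure.pi fun _ : G => D i) (Fintype.card G * r)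
      ≤ mgf g (Measure.pi D) r ^ Fintype.card G := by
  set μ := Measure.pi fun i => Measure.pi fun _ : G => D i
  set N : ℝ := (Fintype.card (ι → G) : ℝ)
  let line (k : ι → G) (x : ι → G → V) : ℝ := ∑ t, g (shiftedDiagonal k x t)
  have hline_mgf (k : ι → G) : mgf (line k) μ r = mgf g (Measure.pi D) r ^ Fintype.card G := by
    rw [← mgf_sum_pi_eq_pow (Measure.pi D) g r]
    exact (measurePreserving_shiftedDiagonal D k).integral_comp'
      (g := fun y => exp (r * ∑ t, g (y t)))
  have hline_int (k : ι → G) : Integrable (fun x => exp (r * line k x)) μ :=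
    (measurePreserving_shiftedDiagonal D k).integrable_comp_of_integrable
      (integrable_exp_mul_sum_pi hg)
  have hsplit (x : ι → G → V) : Fintype.card G * r * 𝔼 j : ι → G, g (fun i => x i (j i))
      = ∑ k, N⁻¹ * (r * line k x) := by
    have := sum_sum_add_const_eq_card_smul (ι := ι) (G := G) fun j => g fun i => x i (j i)
    simp only [line, shiftedDiagonal, MeasurableEquiv.coe_mk, Equiv.coe_fn_mk, ← Finset.mul_sum,
      Fintype.expect_eq_sum_div_card]
    rw [this, nsmul_eq_mul]
    ring
  have hjensen (x : ι → G → V) : exp (Fintype.card G * r * 𝔼 j : ι → G, g (fun i => x i (j i)))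
      ≤ ∑ k, N⁻¹ * exp (r * line k x) := by
    rw [hsplit]
    refine convexOn_exp.map_sum_le (fun _ _ => by positivity) ?_ fun _ _ => Set.mem_univ _
    simp [N]
  calc mgf _ μ (Fintype.card G * r)
      ≤ ∫ x, ∑ k, N⁻¹ * exp (r * line k x) ∂μ :=
        integral_mono_of_nonneg (.of_forall fun _ => by positivity)
          (integrable_finsetSum _ fun k _ => (hline_int k).const_mul _) (.of_forall hjensen)
    _ = ∑ k : ι → G, N⁻¹ * mgf g (Measure.pi D) r ^ Fintype.card G := by
        rw [integral_finsetSum _ fun k _ => (hline_int k).const_mul _]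
        refine Finset.sum_congr rfl fun k _ => ?_
        rw [integral_const_mul, ← hline_mgf k]
        rfl
    _ = mgf g (Measure.pi D) r ^ Fintype.card G := by
        simp [N]

end Grid

section Chernoff

variable {Ω : Type*} [MeasurableSpace Ω] {μ : Measure Ω}

theorem exp_mul_le_one_add_mul {x : ℝ} (hx : x ∈ Set.Icc (0 : ℝ) 1) (t : ℝ) :
    exp (t * x) ≤ 1 + (exp t - 1) * x := by
  have h := convexOn_exp.2 (Set.mem_univ 0) (Set.mem_univ t) (sub_nonneg.2 hx.2) hx.1
    (sub_add_cancel 1 x)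
  simp only [smul_eq_mul, mul_zero, zero_add, exp_zero, mul_one] at h
  rw [mul_comm t x]
  linarith

theorem mgf_sub_integral_le [IsProbabilityMeasure μ] {X : Ω → ℝ} (hX : AEMeasurable X μ)
    (hX01 : ∀ ω, X ω ∈ Set.Icc (0 : ℝ) 1) (t : ℝ) :
    mgf (fun ω => X ω - μ[X]) μ t ≤ exp (μ[X] * (exp t - 1 - t)) := by
  have hXint : Integrable X μ := .of_mem_Icc 0 1 hX (.of_forall hX01)
  have hmgf : mgf X μ t ≤ 1 + (exp t - 1) * μ[X] := by
    calc mgf X μ t ≤ ∫ ω, 1 + (exp t - 1) * X ω ∂μ :=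
          integral_mono (integrable_exp_mul_of_mem_Icc hX (.of_forall hX01))
            ((integrable_const 1).add (hXint.const_mul _))
            fun ω => exp_mul_le_one_add_mul (hX01 ω) t
      _ = 1 + (exp t - 1) * μ[X] := by
          rw [integral_add (integrable_const 1) (hXint.const_mul _), integral_const_mul]
          simp
  calc mgf (fun ω => X ω - μ[X]) μ t = mgf X μ t * exp (t * -μ[X]) := by
        simp_rw [sub_eq_add_neg]
        exact mgf_add_const _
    _ ≤ exp ((exp t - 1) * μ[X]) * exp (t * -μ[X]) := by
        gcongr
        linarith [add_one_le_exp ((exp t - 1) * μ[X])]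
    _ = exp (μ[X] * (exp t - 1 - t)) := by
        rw [← exp_add]
        ring_nf

theorem mgf_sub_integral_le_exp_mul_sq [IsProbabilityMeasure μ] {X : Ω → ℝ}
    (hX : AEMeasurable X μ) (hX01 : ∀ ω, X ω ∈ Set.Icc (0 : ℝ) 1) {t : ℝ} (ht : |t| ≤ 1) :
    mgf (fun ω => X ω - μ[X]) μ t ≤ exp (μ[X] * t ^ 2) := by
  refine (mgf_sub_integral_le hX hX01 t).trans (exp_le_exp.2 ?_)
  have hmean : 0 ≤ μ[X] := integral_nonneg fun ω => (hX01 ω).1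
  exact mul_le_mul_of_nonneg_left (abs_le.1 (abs_exp_sub_one_sub_id_le ht)).2 hmean

theorem measure_abs_ge_le_exp_mul_mgf_add [IsFiniteMeasure μ] {X : Ω → ℝ} (ε : ℝ) {t : ℝ}
    (ht : 0 ≤ t) (h_int_pos : Integrable (fun ω => exp (t * X ω)) μ)
    (h_int_neg : Integrable (fun ω => exp (-t * X ω)) μ) :
    μ.real {ω | ε ≤ |X ω|} ≤ exp (-t * ε) * (mgf X μ t + mgf X μ (-t)) := by
  have hsplit : {ω | ε ≤ |X ω|} = {ω | ε ≤ X ω} ∪ {ω | X ω ≤ -ε} := by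
    ext ω
    simp only [Set.mem_ofPred_eq, Set.mem_union, le_abs', or_comm]
  have hlower := measure_le_le_exp_mul_mgf (-ε) (neg_nonpos.2 ht) h_int_neg
  rw [neg_neg, mul_neg, ← neg_mul] at hlower
  rw [hsplit, mul_add]
  exact (measureReal_union_le _ _).trans
    (add_le_add (measure_ge_le_exp_mul_mgf ε ht h_int_pos) hlower)

theorem measure_abs_ge_two_mul_le_of_mgf_le [IsFiniteMeasure μ] {Y : Ω → ℝ} {m p δ : ℝ}
    (hm : 0 ≤ m) (hp : 0 ≤ p) (hδ : 0 < δ) (hint : ∀ t, Integrable (fun ω => exp (t * Y ω)) μ)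
    (hmgf : ∀ r, |r| ≤ 1 → mgf Y μ (m * r) ≤ exp (m * (p * r ^ 2))) :
    μ.real {ω | 2 * δ ≤ |Y ω|} ≤ 2 * exp (-(2 * m * δ ^ 2) / (4 * p + δ)) := by
  set s := δ / (p + δ)
  have hs : |s| ≤ 1 := by
    rw [abs_of_pos (by positivity), div_le_one (by positivity)]
    linarith
  have hexponent : p * s ^ 2 - s * (2 * δ) ≤ -(2 * δ ^ 2) / (4 * p + δ) := by
    rw [← sub_nonneg]
    have key : -(2 * δ ^ 2) / (4 * p + δ) - (p * s ^ 2 - s * (2 * δ))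
        = δ ^ 2 * (2 * p ^ 2 + 5 * p * δ) / ((p + δ) ^ 2 * (4 * p + δ)) := by
      simp only [s]
      field_simp
      ring
    rw [key]
    positivity
  calc μ.real {ω | 2 * δ ≤ |Y ω|}
      ≤ exp (-(m * s) * (2 * δ)) * (mgf Y μ (m * s) + mgf Y μ (m * -s)) := by
        rw [mul_neg]
        exact measure_abs_ge_le_exp_mul_mgf_add _ (by positivity) (hint _) (hint _)
    _ ≤ exp (-(m * s) * (2 * δ)) * (exp (m * (p * s ^ 2)) + exp (m * (p * (-s) ^ 2))) := by
        gcongr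
        exacts [hmgf s hs, hmgf (-s) (by rwa [abs_neg])]
    _ = 2 * exp (m * (p * s ^ 2 - s * (2 * δ))) := by
        rw [neg_sq, ← two_mul, mul_left_comm, ← exp_add]
        ring_nf
    _ ≤ 2 * exp (-(2 * m * δ ^ 2) / (4 * p + δ)) := by
        gcongr
        calc m * (p * s ^ 2 - s * (2 * δ)) ≤ m * (-(2 * δ ^ 2) / (4 * p + δ)) := by gcongr
          _ = -(2 * m * δ ^ 2) / (4 * p + δ) := by ring

end Chernoff

theorem measure_abs_expect_comp_grid_sub_ge_two_mul_le {ι G V : Type*} [Fintype ι]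
    [DecidableEq ι] [AddGroup G] [Fintype G] [MeasurableSpace V] (D : ι → Measure V)
    [∀ i, IsProbabilityMeasure (D i)] {f : (ι → V) → ℝ} (hf : Measurable f)
    (hf01 : ∀ y, f y ∈ Set.Icc (0 : ℝ) 1) {δ : ℝ} (hδ : 0 < δ) :
    (Measure.pi fun i => Measure.pi fun _ : G => D i).real
        {x | 2 * δ ≤ |𝔼 j : ι → G, (f (fun i => x i (j i)) - ∫ y, f y ∂Measure.pi D)|}
      ≤ 2 * exp (-(2 * Fintype.card G * δ ^ 2) / (4 * ∫ y, f y ∂Measure.pi D + δ)) := by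
  set p := ∫ y, f y ∂Measure.pi D
  have hp : 0 ≤ p := integral_nonneg fun y => (hf01 y).1
  have hcentred_mem (y : ι → V) : f y - p ∈ Set.Icc (-p) (1 - p) :=
    ⟨by linarith [(hf01 y).1], by linarith [(hf01 y).2]⟩
  refine measure_abs_ge_two_mul_le_of_mgf_le (Nat.cast_nonneg _) hp hδ (fun t => ?_)
    fun r hr => ?_
  · refine integrable_exp_mul_of_mem_Icc (a := -p) (b := 1 - p)
      (Measurable.aemeasurable (by simp only [Fintype.expect_eq_sum_div_card]; fun_prop))
      (.of_forall fun x => ⟨?_, ?_⟩)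
    exacts [Finset.le_expect Finset.univ_nonempty fun j _ => (hcentred_mem _).1,
      Finset.expect_le Finset.univ_nonempty fun j _ => (hcentred_mem _).2]
  · calc _ ≤ mgf (fun y => f y - p) (Measure.pi D) r ^ Fintype.card G :=
          mgf_expect_comp_grid_le D <| integrable_exp_mul_of_mem_Icc (hf.sub_const p).aemeasurable
            (.of_forall hcentred_mem)
      _ ≤ exp (p * r ^ 2) ^ Fintype.card G :=
          pow_le_pow_left₀ mgf_nonneg (mgf_sub_integral_le_exp_mul_sq hf.aemeasurable hf01 hr) _
      _ = exp (Fintype.card G * (p * r ^ 2)) := (exp_nat_mul _ _).symm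

theorem empirical_product_concentration_general {V : Type*} [MeasurableSpace V]
    (n m : ℕ) (hm : 1 ≤ m)
    (f : (Fin n → V) → ℝ) (hf : Measurable f)
    (hf01 : ∀ x, f x ∈ Set.Icc (0 : ℝ) 1)
    (D : Fin n → Measure V) (hD : ∀ i, IsProbabilityMeasure (D i))
    (p : ℝ) (hp : p = ∫ x, f x ∂(Measure.pi D))
    (δ : ℝ) (hδ : δ ∈ Set.Ioo (0 : ℝ) 1) :
    (Measure.pi fun i : Fin n => Measure.pi fun _ : Fin m => D i)
        {x : Fin n → Fin m → V |
          2 * δ ≤ |(1 / (m : ℝ) ^ n) * ∑ j : Fin n → Fin m, f (fun i => x i (j i)) - p|}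
      ≤ ENNReal.ofReal
          (2 * Real.exp (-(2 * m * δ ^ 2) / (4 * p + δ) - Real.log δ)) := by
  have : NeZero m := ⟨by omega⟩
  obtain ⟨hδ0, hδ1⟩ := hδ
  have hgrid := measure_abs_expect_comp_grid_sub_ge_two_mul_le (G := Fin m) D hf hf01 hδ0
  rw [Fintype.card_fin, ← hp] at hgrid
  have hmean (x : Fin n → Fin m → V) : 1 / (m : ℝ) ^ n * ∑ j : Fin n → Fin m,
      f (fun i => x i (j i)) - p = 𝔼 j : Fin n → Fin m, (f (fun i => x i (j i)) - p) := by
    simp [Finset.expect_sub_distrib, Fintype.expect_eq_sum_div_card, div_eq_inv_mul]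
  simp_rw [hmean]
  rw [← ofReal_measureReal]
  refine ENNReal.ofReal_le_ofReal (hgrid.trans ?_)
  gcongr
  linarith [log_nonpos hδ0.le hδ1.le]

/-- **Concentration for the product of empirical distributions.**
Let `f : Vⁿ → [0,1]` be measurable, `D¹,…,Dⁿ` probability measures on `V`, and
`p = E_{x ∼ D¹×⋯×Dⁿ}[f]`.  Draw `m` i.i.d. samples from each `Dⁱ`
(independently across coordinates); then the average of `f` over the product of
the coordinate-wise empirical distributions,
`m^{-n} ∑_{j₁,…,jₙ} f(x_{1 j₁},…,x_{n jₙ})`, deviates from `p` by at least `2δ`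
with probability at most `2·exp(−2mδ²/(4p+δ) − ln δ)`. -/
theorem empirical_product_concentration {V : Type*} [MeasurableSpace V]
    (n m : ℕ) (hn : 1 ≤ n) (hm : 1 ≤ m)
    (f : (Fin n → V) → ℝ) (hf : Measurable f)
    (hf01 : ∀ x, f x ∈ Set.Icc (0 : ℝ) 1)
    (D : Fin n → Measure V) (hD : ∀ i, IsProbabilityMeasure (D i))
    (p : ℝ) (hp : p = ∫ x, f x ∂(Measure.pi D))
    (δ : ℝ) (hδ : δ ∈ Set.Ioo (0 : ℝ) 1) :
    (Measure.pi fun i : Fin n => Measure.pi fun _ : Fin m => D i)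
        {x : Fin n → Fin m → V |
          2 * δ ≤ |(1 / (m : ℝ) ^ n) * ∑ j : Fin n → Fin m, f (fun i => x i (j i)) - p|}
      ≤ ENNReal.ofReal
          (2 * Real.exp (-(2 * m * δ ^ 2) / (4 * p + δ) - Real.log δ)) :=
  empirical_product_concentration_general n m hm f hf hf01 D hD p hp δ hδ
end

section
/- Let D be a regular Borel probability distribution on [0,∞) and let ε ∈ (0,1). Let D^trunc_ε be the ε-truncation of D, i.e. the pushforward of D under v ↦ min(v, v(ε)) where v(ε) = inf{t ≥ 0 : F(t) ≥ 1−ε} and F is the CDF of D (this replaces the top ε probability mass of D with a point mass). Then Opt(D^trunc_ε) ≥ (1 − ε)·Opt(D), where for a single buyer Opt(D) = sup_{p ≥ 0} p·P_{v∼D}(v ≥ p). -/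
/-! Prices `p ≤ v(ε)` earn the same revenue under `D` and under its truncation. For a price
`p > v(ε)` the sale probability `q̄ = P(v ≥ p)` is at most `ε`, and `p ≤ v(q)` for every `q < q̄`,
so `p q̄` is a limit of values `p q ≤ R(q)` with `q ≤ ε`. Concavity of `R` on `[q, 1]` together
with `R(1) ≥ 0` gives `(1 - ε) R(q) ≤ R(ε)`, and `R(ε) = ε v(ε)` is earned in the truncation by
posting the price `v(ε)`, which still sells with probability at least `ε`. -/

open MeasureTheory

/-- The value at quantile `q`: `v(q) = inf {t ≥ 0 : F(t) ≥ 1-q}` where `F` is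
the CDF of `D`. -/
noncomputable def qval (D : Measure ℝ) (q : ℝ) : ℝ :=
  sInf {t : ℝ | 0 ≤ t ∧ ENNReal.ofReal (1 - q) ≤ D (Set.Iic t)}

/-- A distribution on `[0,∞)` is regular if its revenue curve in quantile
space, `R(q) = q·v(q)`, is concave on `[0,1]`. -/
def Regular (D : Measure ℝ) : Prop :=
  ConcaveOn ℝ (Set.Icc (0 : ℝ) 1) (fun q => q * qval D q)

/-- Single-buyer optimal revenue: `sup_{p ≥ 0} p·P_{v∼D}(v ≥ p)`. -/
noncomputable def Opt1 (D : Measure ℝ) : ℝ :=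
  sSup {r : ℝ | ∃ p : ℝ, 0 ≤ p ∧ r = p * (D (Set.Ici p)).toReal}

open Set

lemma mul_le_of_forall_mem_Ioo {a b c M : ℝ} (hab : a < b) (h : ∀ x ∈ Ioo a b, c * x ≤ M) :
    c * b ≤ M :=
  le_on_closure h (by fun_prop) (by fun_prop) (by simp [closure_Ioo hab.ne, hab.le])

lemma ConcaveOn.one_sub_mul_le {f : ℝ → ℝ} (hf : ConcaveOn ℝ (Icc 0 1) f) {q x : ℝ}
    (hq : 0 ≤ q) (hqx : q ≤ x) (hx : x < 1) (hfq : 0 ≤ f q) (hf1 : 0 ≤ f 1) :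
    (1 - x) * f q ≤ f x := by
  have hq1 : 0 < 1 - q := by linarith
  -- `x = θ q + (1 - θ) 1` with `θ = (1 - x) / (1 - q) ≥ 1 - x`
  have hθ : 1 - x ≤ (1 - x) / (1 - q) := by rw [le_div_iff₀ hq1]; nlinarith
  have hcomb : (1 - x) / (1 - q) * f q + (x - q) / (1 - q) * f 1 ≤
      f ((1 - x) / (1 - q) * q + (x - q) / (1 - q) * 1) :=
    hf.2 ⟨hq, by linarith⟩ ⟨zero_le_one, le_rfl⟩ (div_nonneg (by linarith) hq1.le)
      (div_nonneg (sub_nonneg.2 hqx) hq1.le) (by field_simp; ring)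
  rw [show (1 - x) / (1 - q) * q + (x - q) / (1 - q) * 1 = x by field_simp; ring] at hcomb
  nlinarith [div_nonneg (sub_nonneg.2 hqx) hq1.le]

section Quantile

variable (D : Measure ℝ)

lemma qval_nonneg (q : ℝ) : 0 ≤ qval D q :=
  Real.sInf_nonneg fun _ ht => ht.1

lemma qval_le {q t : ℝ} (ht : 0 ≤ t) (h : ENNReal.ofReal (1 - q) ≤ D (Iic t)) : qval D q ≤ t :=
  csInf_le ⟨0, fun _ hs => hs.1⟩ ⟨ht, h⟩

variable [IsProbabilityMeasure D]

lemma lt_measureReal_Ioi_of_lt_qval {q t : ℝ} (ht : 0 ≤ t) (htq : t < qval D q) :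
    q < D.real (Ioi t) := by
  by_contra! h
  refine htq.not_ge (qval_le D ht ?_)
  rw [ENNReal.ofReal_le_iff_le_toReal (measure_ne_top D _), ← measureReal_def, ← compl_Ioi,
    probReal_compl_eq_one_sub measurableSet_Ioi]
  linarith

lemma le_qval_of_lt_measureReal_Ici {p q : ℝ} (hq : 0 < q) (h : q < D.real (Ici p)) :
    p ≤ qval D q := by
  have hne : {t : ℝ | 0 ≤ t ∧ ENNReal.ofReal (1 - q) ≤ D (Iic t)}.Nonempty := by
    have hlt : ENNReal.ofReal (1 - q) < D univ := by
      rw [measure_univ]; exact ENNReal.ofReal_lt_one.2 (by linarith)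
    obtain ⟨t, ht0, ht⟩ := ((Filter.eventually_ge_atTop 0).and
      ((tendsto_measure_Iic_atTop D).eventually_const_lt hlt)).exists
    exact ⟨t, ht0, ht.le⟩
  refine le_csInf hne fun t ⟨_, ht⟩ => ?_
  by_contra! htp
  rw [ENNReal.ofReal_le_iff_le_toReal (measure_ne_top D _), ← measureReal_def] at ht
  have hsum : D.real (Iic t) + D.real (Ici p) ≤ 1 := by
    rw [← measureReal_union (Iic_disjoint_Ici.2 htp.not_ge) measurableSet_Ici]
    exact measureReal_le_one
  linarith

end Quantile

section Revenue

variable (D : Measure ℝ)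

lemma Opt1_nonneg : 0 ≤ Opt1 D :=
  Real.sSup_nonneg <| by rintro _ ⟨p, hp, rfl⟩; positivity

lemma Opt1_le {M : ℝ} (hM : 0 ≤ M) (h : ∀ p, 0 ≤ p → p * D.real (Ici p) ≤ M) : Opt1 D ≤ M :=
  Real.sSup_le (by rintro _ ⟨p, hp, rfl⟩; exact h p hp) hM

lemma le_Opt1 {M : ℝ} (hM : ∀ p, 0 ≤ p → p * D.real (Ici p) ≤ M) {p : ℝ} (hp : 0 ≤ p) :
    p * D.real (Ici p) ≤ Opt1 D :=
  le_csSup ⟨M, by rintro _ ⟨p, hp, rfl⟩; exact hM p hp⟩ ⟨p, hp, rfl⟩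

lemma map_min_measureReal_Ici_of_le {c p : ℝ} (hpc : p ≤ c) :
    (D.map fun v => min v c).real (Ici p) = D.real (Ici p) := by
  rw [map_measureReal_apply (by fun_prop) measurableSet_Ici]
  congr 1
  ext v
  simp [hpc]

lemma map_min_measureReal_Ici_of_lt {c p : ℝ} (hcp : c < p) :
    (D.map fun v => min v c).real (Ici p) = 0 := by
  rw [map_measureReal_apply (by fun_prop) measurableSet_Ici]
  convert measureReal_empty
  ext v
  simp [hcp.not_ge]

lemma le_Opt1_map_min [IsProbabilityMeasure D] {c p : ℝ} (hp : 0 ≤ p) (hpc : p ≤ c) :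
    p * D.real (Ici p) ≤ Opt1 (D.map fun v => min v c) := by
  rw [← map_min_measureReal_Ici_of_le D hpc]
  refine le_Opt1 _ (M := c) (fun p' hp' => ?_) hp
  rcases le_or_gt p' c with hp'c | hcp'
  · rw [map_min_measureReal_Ici_of_le D hp'c]
    nlinarith [measureReal_le_one (μ := D) (s := Ici p'), measureReal_nonneg (μ := D) (s := Ici p')]
  · rw [map_min_measureReal_Ici_of_lt D hcp']
    linarith

lemma mul_qval_le_Opt1_map_min [IsProbabilityMeasure D] (q : ℝ) :
    q * qval D q ≤ Opt1 (D.map fun v => min v (qval D q)) := by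
  rcases (qval_nonneg D q).eq_or_lt with h0 | hpos
  · rw [← h0, mul_zero]
    exact Opt1_nonneg _
  refine mul_le_of_forall_mem_Ioo hpos fun t ⟨ht0, htq⟩ => ?_
  have hq : q ≤ D.real (Ici t) := (lt_measureReal_Ioi_of_lt_qval D ht0.le htq).le.trans
    (measureReal_mono Ioi_subset_Ici_self)
  calc q * t ≤ t * D.real (Ici t) := by rw [mul_comm]; gcongr
    _ ≤ _ := le_Opt1_map_min D ht0.le htq.le

lemma Regular.one_sub_mul_revenue_le [IsProbabilityMeasure D] (hreg : Regular D) {ε p : ℝ}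
    (hε : ε ∈ Ioo 0 1) (hp : qval D ε < p) :
    (1 - ε) * (p * D.real (Ici p)) ≤ ε * qval D ε := by
  have hqε : D.real (Ici p) ≤ ε := by
    by_contra! h
    exact hp.not_ge (le_qval_of_lt_measureReal_Ici D hε.1 h)
  rcases measureReal_nonneg.eq_or_lt with h0 | hpos
  · rw [← h0, mul_zero, mul_zero]
    exact mul_nonneg hε.1.le (qval_nonneg D ε)
  rw [← mul_assoc]
  refine mul_le_of_forall_mem_Ioo hpos fun q ⟨hq0, hq⟩ => ?_
  calc (1 - ε) * p * q = (1 - ε) * (q * p) := by ring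
    _ ≤ (1 - ε) * (q * qval D q) := mul_le_mul_of_nonneg_left
        (mul_le_mul_of_nonneg_left (le_qval_of_lt_measureReal_Ici D hq0 hq) hq0.le)
        (sub_nonneg.2 hε.2.le)
    _ ≤ ε * qval D ε := hreg.one_sub_mul_le hq0.le (by linarith) hε.2
        (mul_nonneg hq0.le (qval_nonneg D q)) (by simpa using qval_nonneg D 1)

end Revenue

theorem truncation_single_buyer_general (D : Measure ℝ) [IsProbabilityMeasure D]
    (hreg : Regular D)
    (ε : ℝ) (hε : ε ∈ Set.Ioo (0 : ℝ) 1) :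
    (1 - ε) * Opt1 D ≤ Opt1 (Measure.map (fun v : ℝ => min v (qval D ε)) D) := by
  have h1ε : 0 < 1 - ε := sub_pos.2 hε.2
  rw [← le_div_iff₀' h1ε]
  refine Opt1_le D (div_nonneg (Opt1_nonneg _) h1ε.le) fun p hp => ?_
  rw [le_div_iff₀' h1ε]
  rcases le_or_gt p (qval D ε) with hpε | hεp
  · calc (1 - ε) * (p * D.real (Ici p)) ≤ p * D.real (Ici p) :=
          mul_le_of_le_one_left (by positivity) (by linarith [hε.1])
      _ ≤ _ := le_Opt1_map_min D hp hpε
  · exact (hreg.one_sub_mul_revenue_le D hε hεp).trans (mul_qval_le_Opt1_map_min D ε)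

/-- **Truncation of a regular distribution.** Replacing the top `ε` probability
mass of a regular distribution `D` on `[0,∞)` by a point mass at the quantile-ε
value (i.e. pushing `D` forward under `v ↦ min(v, v(ε))`) keeps at least a
`1-ε` fraction of the single-buyer optimal revenue. -/
theorem truncation_single_buyer (D : Measure ℝ) [IsProbabilityMeasure D]
    (hnonneg : D (Set.Iio 0) = 0) (hreg : Regular D)
    (ε : ℝ) (hε : ε ∈ Set.Ioo (0 : ℝ) 1) :
    (1 - ε) * Opt1 D ≤ Opt1 (Measure.map (fun v : ℝ => min v (qval D ε)) D) :=
  truncation_single_buyer_general D hreg ε hε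
end
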